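/- Let f : ℤ² → {contact elements} be a nondegenerate discrete channel surface with circular direction '+' and let p ∈ V with ⟨p,p⟩ < 0. Then for every n ∈ ℤ there exists a subspace W of p^⊥ with dim W ≤ 4 that contains the point spheres of f(m,n) and of f(m,n+1) for every m ∈ ℤ. (Any two adjacent circular curvature lines of a discrete channel surface lie on a common sphere, called a 'face-sphere' of the discrete channel surface.) -/

import Mathlib

noncomputable section

/-- The Lie sphere geometric model: `ℝ^{4,2}`. -/
abbrev V6 : Type := Fin 6 → ℝ

/-- The symmetric bilinear form of signature `(4,2)` on `V6`. -/
def B (x y : V6) : ℝ :=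
  x 0 * y 0 + x 1 * y 1 + x 2 * y 2 + x 3 * y 3 - x 4 * y 4 - x 5 * y 5

/-- An oriented sphere: a 1-dimensional isotropic subspace. -/
def IsSphere (S : Submodule ℝ V6) : Prop :=
  Module.finrank ℝ S = 1 ∧ ∀ x ∈ S, B x x = 0

/-- A contact element: a 2-dimensional totally isotropic subspace. -/
def IsContact (W : Submodule ℝ V6) : Prop :=
  Module.finrank ℝ W = 2 ∧ ∀ x ∈ W, ∀ y ∈ W, B x y = 0

/-- A `(2,1)`-plane: 3-dim subspace on which the form is nondegenerate of signature `(2,1)`. -/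
def IsSig21 (D : Submodule ℝ V6) : Prop :=
  ∃ u v w : V6, D = Submodule.span ℝ {u, v, w} ∧
    B u u = 1 ∧ B v v = 1 ∧ B w w = -1 ∧ B u v = 0 ∧ B u w = 0 ∧ B v w = 0

/-- A Dupin cyclide: a pair of `(2,1)`-planes, the second the orthogonal complement of the first. -/
def IsDupin (D E : Submodule ℝ V6) : Prop :=
  IsSig21 D ∧ IsSig21 E ∧ ∀ x : V6, x ∈ E ↔ ∀ y ∈ D, B x y = 0

/-- Horizontal curvature sphere on the edge from `(m,n)` to `(m+1,n)`. -/
def sPlus (f : ℤ × ℤ → Submodule ℝ V6) (m n : ℤ) : Submodule ℝ V6 :=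
  f (m, n) ⊓ f (m + 1, n)

/-- Vertical curvature sphere on the edge from `(m,n)` to `(m,n+1)`. -/
def sMinus (f : ℤ × ℤ → Submodule ℝ V6) (m n : ℤ) : Submodule ℝ V6 :=
  f (m, n) ⊓ f (m, n + 1)

/-- A discrete Legendre map. -/
def IsLegendre (f : ℤ × ℤ → Submodule ℝ V6) : Prop :=
  (∀ p : ℤ × ℤ, IsContact (f p)) ∧
  (∀ m n : ℤ, Module.finrank ℝ (sPlus f m n) = 1) ∧
  (∀ m n : ℤ, Module.finrank ℝ (sMinus f m n) = 1)

/-- A face-cyclide congruence for `f`. -/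
def IsFaceCyclideCongruence (f D E : ℤ × ℤ → Submodule ℝ V6) : Prop :=
  ∀ m n : ℤ,
    IsDupin (D (m, n)) (E (m, n)) ∧
    sPlus f m n ≤ D (m, n) ∧ sPlus f m (n + 1) ≤ D (m, n) ∧
    sMinus f m n ≤ E (m, n) ∧ sMinus f (m + 1) n ≤ E (m, n)

/-- A discrete channel surface with circular direction `+`. -/
def IsChannelPlus (f : ℤ × ℤ → Submodule ℝ V6) : Prop :=
  IsLegendre f ∧
  ∃ D E : ℤ × ℤ → Submodule ℝ V6,
    IsFaceCyclideCongruence f D E ∧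
    ∀ m m' n : ℤ, D (m, n) = D (m', n) ∧ E (m, n) = E (m', n)

/-- The orthogonal complement of a point sphere complex `p`. -/
def pPerp (p : V6) : Submodule ℝ V6 where
  carrier := {x | B x p = 0}
  add_mem' := by
    intro a b ha hb
    simp only [Set.mem_setOf_eq, B, Pi.add_apply] at *
    linear_combination ha + hb
  zero_mem' := by simp [B]
  smul_mem' := by
    intro c x hx
    simp only [Set.mem_setOf_eq, B, Pi.smul_apply, smul_eq_mul] at *
    linear_combination c * hx

/-- `f` is nondegenerate: every contact element of `f` is spanned by a horizontal and a
vertical curvature sphere. -/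
def Nondeg (f : ℤ × ℤ → Submodule ℝ V6) : Prop :=
  ∀ m n : ℤ, sPlus f m n ≠ sMinus f m n ∧ sPlus f m (n + 1) ≠ sMinus f m n


/-! Fix a row `n` and let `(D, E)` be its Lie cyclide. Every contact element of the rows `n` and
`n + 1` is the sum of a horizontal curvature sphere in `D` and a vertical one in `E`; as
`D ∩ E = 0`, this forces the horizontal curvature spheres along each of the two rows to be
constant, say `S` and `T`. So both rows lie in `U = S + E + T`, of dimension at most `5`.
Finally `U ⊄ p^⊥`: otherwise a nonzero isotropic `a ∈ S` would be orthogonal to `p` and to a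
timelike `w ∈ E ⊥ D`, while in signature `(4,2)` the orthogonal complement of a negative
definite plane is positive definite. Hence `U ∩ p^⊥` has dimension at most `4`. -/

theorem B_comm (x y : V6) : B x y = B y x := by
  unfold B; ring

theorem finrank_le_two_of_B_self_nonpos {N : Submodule ℝ V6} (hN : ∀ x ∈ N, B x x ≤ 0) :
    Module.finrank ℝ N ≤ 2 := by
  -- `B` is positive definite on the kernel of the projection to the last two coordinates
  let π : V6 →ₗ[ℝ] Fin 2 → ℝ := LinearMap.funLeft ℝ ℝ ![4, 5]
  have hinj : Function.Injective (π ∘ₗ N.subtype) := by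
    rw [← LinearMap.ker_eq_bot, LinearMap.ker_eq_bot']
    rintro ⟨x, hx⟩ hπx
    have h4 : x 4 = 0 := congrFun hπx 0
    have h5 : x 5 = 0 := congrFun hπx 1
    have hB := hN x hx
    simp only [B, h4, h5] at hB
    obtain ⟨h0, h1, h2, h3⟩ : x 0 = 0 ∧ x 1 = 0 ∧ x 2 = 0 ∧ x 3 = 0 := by
      refine ⟨?_, ?_, ?_, ?_⟩ <;>
        nlinarith [mul_self_nonneg (x 0), mul_self_nonneg (x 1), mul_self_nonneg (x 2),
          mul_self_nonneg (x 3)]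
    ext i
    fin_cases i <;> simp [h0, h1, h2, h3, h4, h5]
  simpa using LinearMap.finrank_le_finrank_of_injective hinj

theorem eq_zero_of_isotropic_of_orthogonal {w p a : V6} (hww : B w w < 0) (hpp : B p p < 0)
    (hwp : B w p = 0) (haw : B a w = 0) (hap : B a p = 0) (haa : B a a = 0) : a = 0 := by
  by_contra ha
  have hli : LinearIndependent ℝ ![w, p, a] := by
    rw [Fintype.linearIndependent_iff]
    intro c hc
    simp only [Fin.sum_univ_three, Matrix.cons_val] at hc
    have hw := congrArg (B · w) hc
    have hp := congrArg (B · p) hc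
    simp only [B, Pi.add_apply, Pi.smul_apply, smul_eq_mul, Pi.zero_apply] at hw hp
    have hc0 : c 0 = 0 := by
      have : c 0 * B w w = 0 := by
        unfold B at hwp haw ⊢; linear_combination hw - c 1 * hwp - c 2 * haw
      exact (mul_eq_zero.mp this).resolve_right hww.ne
    have hc1 : c 1 = 0 := by
      have : c 1 * B p p = 0 := by
        unfold B at hwp hap ⊢; linear_combination hp - c 0 * hwp - c 2 * hap
      exact (mul_eq_zero.mp this).resolve_right hpp.ne
    have hc2 : c 2 = 0 := by simpa [hc0, hc1, ha] using hc
    intro i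
    fin_cases i <;> assumption
  have hnonpos : ∀ x ∈ Submodule.span ℝ (Set.range ![w, p, a]), B x x ≤ 0 := by
    intro x hx
    obtain ⟨c, rfl⟩ := (Submodule.mem_span_range_iff_exists_fun ℝ).mp hx
    simp only [Fin.sum_univ_three, Matrix.cons_val]
    have : B (c 0 • w + c 1 • p + c 2 • a) (c 0 • w + c 1 • p + c 2 • a)
        = c 0 ^ 2 * B w w + c 1 ^ 2 * B p p := by
      unfold B at *
      simp only [Pi.add_apply, Pi.smul_apply, smul_eq_mul]
      linear_combination (2 * c 0 * c 1) * hwp + (2 * c 0 * c 2) * haw + (2 * c 1 * c 2) * hap +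
        c 2 ^ 2 * haa
    rw [this]
    nlinarith [sq_nonneg (c 0), sq_nonneg (c 1)]
  have := finrank_le_two_of_B_self_nonpos hnonpos
  rw [finrank_span_eq_card hli] at this
  simp at this

theorem IsSig21.finrank_le_three {D : Submodule ℝ V6} (hD : IsSig21 D) :
    Module.finrank ℝ D ≤ 3 := by
  classical
  obtain ⟨u, v, w, rfl, -⟩ := hD
  exact (finrank_span_le_card _).trans (by simpa using Finset.card_le_three)

theorem IsDupin.disjoint {D E : Submodule ℝ V6} (hDE : IsDupin D E) : Disjoint D E := by
  obtain ⟨⟨u, v, w, rfl, huu, hvv, hww, huv, huw, hvw⟩, -, hE⟩ := hDE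
  rw [Submodule.disjoint_def]
  intro x hxD hxE
  obtain ⟨a, b, c, rfl⟩ := Submodule.mem_span_triple.mp hxD
  have hu := (hE _).mp hxE u (Submodule.subset_span (by simp))
  have hv := (hE _).mp hxE v (Submodule.subset_span (by simp))
  have hw := (hE _).mp hxE w (Submodule.subset_span (by simp))
  unfold B at *
  simp only [Pi.add_apply, Pi.smul_apply, smul_eq_mul] at hu hv hw
  have ha : a = 0 := by linear_combination hu - a * huu - b * huv - c * huw
  have hb : b = 0 := by linear_combination hv - a * huv - b * hvv - c * hvw
  have hc : c = 0 := by linear_combination -hw + a * huw + b * hvw + c * hww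
  simp [ha, hb, hc]

theorem IsDupin.not_sup_le_pPerp {D E S : Submodule ℝ V6} (hDE : IsDupin D E) (hSD : S ≤ D)
    (hS : S ≠ ⊥) (hSiso : ∀ x ∈ S, B x x = 0) {p : V6} (hp : B p p < 0) :
    ¬ S ⊔ E ≤ pPerp p := by
  intro hle
  obtain ⟨-, ⟨u, v, w, rfl, -, -, hww, -, -, -⟩, hDE⟩ := hDE
  have hwE : w ∈ Submodule.span ℝ {u, v, w} := Submodule.subset_span (by simp)
  obtain ⟨a, haS, ha⟩ := Submodule.exists_mem_ne_zero_of_ne_bot hS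
  have haw : B a w = 0 := by rw [B_comm]; exact (hDE w).mp hwE a (hSD haS)
  have hwp : B w p = 0 := hle (Submodule.mem_sup_right hwE)
  have hap : B a p = 0 := hle (Submodule.mem_sup_left haS)
  exact ha <| eq_zero_of_isotropic_of_orthogonal (by rw [hww]; norm_num) hp hwp haw hap
    (hSiso a haS)

theorem le_of_le_sup_of_disjoint {α : Type*} [Lattice α] [IsModularLattice α] [OrderBot α]
    {a b c d x : α} (hcd : Disjoint c d) (hac : a ≤ c) (hbd : b ≤ d) (hx : x ≤ a ⊔ b)
    (hxc : x ≤ c) : x ≤ a :=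
  calc x ≤ (a ⊔ b) ⊓ c := le_inf hx hxc
    _ = a ⊔ b ⊓ c := sup_inf_assoc_of_le b hac
    _ = a := by rw [(hcd.symm.mono_left hbd).eq_bot, sup_bot_eq]

namespace Submodule

variable {K W : Type*} [DivisionRing K] [AddCommGroup W] [Module K W] [FiniteDimensional K W]

theorem sup_eq_of_finrank_eq_one {S T F : Submodule K W} (hSF : S ≤ F) (hTF : T ≤ F)
    (hS : Module.finrank K S = 1) (hT : Module.finrank K T = 1) (hST : S ≠ T)
    (hF : Module.finrank K F = 2) : S ⊔ T = F := by
  have hinf : Module.finrank K ↥(S ⊓ T) = 0 := by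
    by_contra h
    have hS' : S ⊓ T = S := eq_of_le_of_finrank_le inf_le_left (by rw [hS]; omega)
    have hT' : S ⊓ T = T := eq_of_le_of_finrank_le inf_le_right (by rw [hT]; omega)
    exact hST (hS'.symm.trans hT')
  have := finrank_sup_add_finrank_inf_eq S T
  exact eq_of_le_of_finrank_le (sup_le hSF hTF) (by omega)

theorem apply_eq_apply_zero_of_le_sup_succ {s t : ℤ → Submodule K W} {D E : Submodule K W}
    (hDE : Disjoint D E) (hsD : ∀ m, s m ≤ D) (htE : ∀ m, t m ≤ E)
    (hs : ∀ m, s m ≤ s (m + 1) ⊔ t (m + 1)) (hs1 : ∀ m, Module.finrank K (s m) = 1) (m : ℤ) :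
    s m = s 0 := by
  have hper : Function.Periodic s 1 := fun m =>
    (eq_of_le_of_finrank_eq (le_of_le_sup_of_disjoint hDE (hsD _) (htE _) (hs m) (hsD m))
      (by rw [hs1, hs1])).symm
  simpa using hper.int_mul_eq m

theorem finrank_inf_lt_of_not_le {U P : Submodule K W} (h : ¬ U ≤ P) :
    Module.finrank K ↥(U ⊓ P) < Module.finrank K U :=
  finrank_lt_finrank_of_lt (inf_le_left.lt_of_ne fun hU => h (inf_eq_left.mp hU))

end Submodule

section Curvature

variable {f : ℤ × ℤ → Submodule ℝ V6}

theorem sPlus_ne_bot (hf : IsLegendre f) (m n : ℤ) : sPlus f m n ≠ ⊥ := fun h => by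
  simpa [Submodule.finrank_eq_zero.mpr h] using hf.2.1 m n

theorem B_self_eq_zero_of_mem_sPlus (hf : IsLegendre f) {m n : ℤ} {x : V6}
    (hx : x ∈ sPlus f m n) : B x x = 0 :=
  (hf.1 (m, n)).2 x (Submodule.mem_inf.mp hx).1 x (Submodule.mem_inf.mp hx).1

theorem sPlus_sup_sMinus (hf : IsLegendre f) (hnd : Nondeg f) (m n : ℤ) :
    sPlus f m n ⊔ sMinus f m n = f (m, n) :=
  Submodule.sup_eq_of_finrank_eq_one inf_le_left inf_le_left (hf.2.1 m n) (hf.2.2 m n)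
    (hnd m n).1 (hf.1 (m, n)).1

theorem sPlus_succ_sup_sMinus (hf : IsLegendre f) (hnd : Nondeg f) (m n : ℤ) :
    sPlus f m (n + 1) ⊔ sMinus f m n = f (m, n + 1) :=
  Submodule.sup_eq_of_finrank_eq_one inf_le_left inf_le_right (hf.2.1 m (n + 1)) (hf.2.2 m n)
    (hnd m n).2 (hf.1 (m, n + 1)).1

theorem sPlus_eq_sPlus_zero (hf : IsLegendre f) (hnd : Nondeg f) {D E : Submodule ℝ V6}
    (hDE : Disjoint D E) {n : ℤ} (hD : ∀ m, sPlus f m n ≤ D) (hE : ∀ m, sMinus f m n ≤ E)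
    (m : ℤ) : sPlus f m n = sPlus f 0 n :=
  Submodule.apply_eq_apply_zero_of_le_sup_succ hDE hD hE
    (fun m => (sPlus_sup_sMinus hf hnd (m + 1) n).symm ▸ inf_le_right) (hf.2.1 · n) m

theorem sPlus_succ_eq_sPlus_succ_zero (hf : IsLegendre f) (hnd : Nondeg f)
    {D E : Submodule ℝ V6} (hDE : Disjoint D E) {n : ℤ} (hD : ∀ m, sPlus f m (n + 1) ≤ D)
    (hE : ∀ m, sMinus f m n ≤ E) (m : ℤ) : sPlus f m (n + 1) = sPlus f 0 (n + 1) :=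
  Submodule.apply_eq_apply_zero_of_le_sup_succ hDE hD hE
    (fun m => (sPlus_succ_sup_sMinus hf hnd (m + 1) n).symm ▸ inf_le_right) (hf.2.1 · (n + 1)) m

end Curvature

/-- For a nondegenerate discrete channel surface with circular direction `+`
and any point sphere complex `p`, two adjacent circular curvature lines lie on a common
sphere: there is a subspace `W ≤ p^⊥` of dimension at most 4 containing the point spheres of
`f(m,n)` and `f(m,n+1)` for all `m` (a face-sphere of the discrete channel surface). -/
theorem face_spheres_exist
    (f : ℤ × ℤ → Submodule ℝ V6) (hf : IsChannelPlus f) (hnd : Nondeg f)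
    (p : V6) (hp : B p p < 0) :
    ∀ n : ℤ, ∃ W : Submodule ℝ V6, W ≤ pPerp p ∧ Module.finrank ℝ W ≤ 4 ∧
      ∀ m : ℤ, f (m, n) ⊓ pPerp p ≤ W ∧ f (m, n + 1) ⊓ pPerp p ≤ W := by
  obtain ⟨hleg, D, E, hcong, hconst⟩ := hf
  intro n
  have hDE : IsDupin (D (0, n)) (E (0, n)) := (hcong 0 n).1
  have hD : ∀ m, sPlus f m n ≤ D (0, n) ∧ sPlus f m (n + 1) ≤ D (0, n) := fun m =>
    (hconst m 0 n).1 ▸ ⟨(hcong m n).2.1, (hcong m n).2.2.1⟩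
  have hE : ∀ m, sMinus f m n ≤ E (0, n) := fun m => (hconst m 0 n).2 ▸ (hcong m n).2.2.2.1
  set U := sPlus f 0 n ⊔ E (0, n) ⊔ sPlus f 0 (n + 1)
  have hfU : ∀ m, f (m, n) ≤ U ∧ f (m, n + 1) ≤ U := fun m => by
    rw [← sPlus_sup_sMinus hleg hnd, ← sPlus_succ_sup_sMinus hleg hnd,
      sPlus_eq_sPlus_zero hleg hnd hDE.disjoint (hD · |>.1) hE,
      sPlus_succ_eq_sPlus_succ_zero hleg hnd hDE.disjoint (hD · |>.2) hE]
    exact ⟨sup_le (le_sup_left.trans le_sup_left) ((hE m).trans (le_sup_right.trans le_sup_left)),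
      sup_le le_sup_right ((hE m).trans (le_sup_right.trans le_sup_left))⟩
  have hUp : ¬ U ≤ pPerp p := fun h => hDE.not_sup_le_pPerp (hD 0).1 (sPlus_ne_bot hleg 0 n)
    (fun _ => B_self_eq_zero_of_mem_sPlus hleg) hp (le_sup_left.trans h)
  have hU : Module.finrank ℝ U ≤ 5 := by
    have : Module.finrank ℝ U ≤
        Module.finrank ℝ ↥(sPlus f 0 n ⊔ E (0, n)) + Module.finrank ℝ (sPlus f 0 (n + 1)) :=
      Submodule.finrank_add_le_finrank_add_finrank _ _
    have := Submodule.finrank_add_le_finrank_add_finrank (sPlus f 0 n) (E (0, n))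
    have := hDE.2.1.finrank_le_three
    have := hleg.2.1 0 n
    have := hleg.2.1 0 (n + 1)
    omega
  refine ⟨U ⊓ pPerp p, inf_le_right, ?_, fun m => ⟨inf_le_inf_right _ (hfU m).1,
    inf_le_inf_right _ (hfU m).2⟩⟩
  have := Submodule.finrank_inf_lt_of_not_le hUp
  omega
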